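/- Let n ≥ 2 and let W be the span in EuclideanSpace ℂ (Fin n → Fin 2) of all Dicke states {D_n^k : 0 ≤ k ≤ n}. Then the n-qubit space decomposes as the orthogonal direct sum of: (i) the span of the two coordinate basis vectors e_{(0,…,0)} and e_{(1,…,1)}; (ii) the span of {D_n^k : 1 ≤ k ≤ n−1}, which has finrank n − 1 and all of whose nonzero vectors are GME; and (iii) the orthogonal complement Wᗮ, which has finrank 2^n − n − 1 and contains no nonzero fully product vector. -/

import Mathlib

/-- The unnormalized `n`-qubit Dicke state with `k` excitations. -/
noncomputable def dicke (n k : ℕ) : EuclideanSpace ℂ (Fin n → Fin 2) :=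
  WithLp.toLp 2 (fun (i : Fin n → Fin 2) => if (∑ j, ((i j : ℕ))) = k then (1 : ℂ) else 0)

/-- A vector of the `n`-qubit space is *fully product* if it is a simple tensor. -/
def FullyProduct {n : ℕ} (ψ : EuclideanSpace ℂ (Fin n → Fin 2)) : Prop :=
  ∃ φ : Fin n → Fin 2 → ℂ, ∀ i, ψ i = ∏ j, φ j (i j)

/-- `ψ` is biseparable across the bipartition `(S, Sᶜ)` of the `n` qubits. -/
def Biseparable {n : ℕ} (S : Set (Fin n))
    (ψ : EuclideanSpace ℂ (Fin n → Fin 2)) : Prop :=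
  ∃ (φ : ((j : S) → Fin 2) → ℂ) (χ : ((j : ↥Sᶜ) → Fin 2) → ℂ),
    ∀ i, ψ i = φ (fun j => i j.val) * χ (fun j => i j.val)

/-- A nonzero vector is genuinely multipartite entangled if it is not biseparable
across any nontrivial bipartition. -/
def GME {n : ℕ} (ψ : EuclideanSpace ℂ (Fin n → Fin 2)) : Prop :=
  ψ ≠ 0 ∧ ∀ S : Set (Fin n), S ≠ ∅ → S ≠ Set.univ → ¬ Biseparable S ψ

/-!
Dicke states are nonzero indicator vectors of the Hamming-weight classes, hence pairwise
orthogonal; this gives the orthogonality and dimension statements.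

A vector in the span of Dicke states has the form `ψ i = c (hammingNorm i)`. If it factors
across a cut with `j₀ ∈ S`, `j₁ ∉ S`, exchanging the `S`-parts of `a + e_{j₀}` and
`a + e_{j₁}` (for `a` of weight `m` vanishing at `j₀, j₁`) gives
`c (m + 1) ^ 2 = c m * c (m + 2)`, so `c 0 = 0` propagates to all weights below `n`.

A product vector `ψ i = ∏ j, φ j (i j)` has generating polynomial `∏ j, (φ j 0 + φ j 1 X)`,
whose `k`-th coefficient is `⟪D_n^k, ψ⟫`. Orthogonality to all Dicke states kills this
polynomial, so some factor `φ j` vanishes and with it `ψ`.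
-/

open Finset

lemma fin_two_val_eq_ite (x : Fin 2) : (x : ℕ) = if x ≠ 0 then 1 else 0 := by
  fin_cases x <;> rfl

lemma sum_val_eq_hammingNorm {n : ℕ} (i : Fin n → Fin 2) :
    ∑ j, (i j : ℕ) = hammingNorm i := by
  simp only [hammingNorm, card_filter, fin_two_val_eq_ite]

def bits {n : ℕ} (T : Finset (Fin n)) : Fin n → Fin 2 := fun j => if j ∈ T then 1 else 0

lemma hammingNorm_bits {n : ℕ} (T : Finset (Fin n)) : hammingNorm (bits T) = #T := by
  simp [hammingNorm, bits]

lemma hammingNorm_eq_card_iff {n : ℕ} (i : Fin n → Fin 2) :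
    hammingNorm i = n ↔ i = fun _ => 1 := by
  have : hammingNorm i = n ↔ ∀ j, i j ≠ 0 := by
    simpa [hammingNorm] using card_filter_eq_iff (s := univ) (p := fun j => i j ≠ 0)
  rw [this, funext_iff]
  exact forall_congr' fun j => by omega

lemma exists_hammingNorm_eq {n m : ℕ} (h : m ≤ n) :
    ∃ i : Fin n → Fin 2, hammingNorm i = m := by
  obtain ⟨T, -, hT⟩ := exists_subset_card_eq (show m ≤ #(univ : Finset (Fin n)) by simpa)
  exact ⟨bits T, by rw [hammingNorm_bits, hT]⟩

lemma dicke_apply (n k : ℕ) (i : Fin n → Fin 2) :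
    dicke n k i = if hammingNorm i = k then 1 else 0 := by
  simp [dicke, sum_val_eq_hammingNorm]

lemma dicke_ne_zero {n k : ℕ} (h : k ≤ n) : dicke n k ≠ 0 := by
  obtain ⟨i, hi⟩ := exists_hammingNorm_eq h
  intro h0
  simpa [dicke_apply, hi] using congrArg (· i) h0

lemma dicke_zero (n : ℕ) : dicke n 0 = EuclideanSpace.single (fun _ => 0) 1 := by
  ext i
  simp [dicke_apply, hammingNorm_eq_zero]
  rfl

lemma dicke_self (n : ℕ) : dicke n n = EuclideanSpace.single (fun _ => 1) 1 := by
  ext i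
  simp [dicke_apply, hammingNorm_eq_card_iff]

lemma inner_dicke_left (n k : ℕ) (ψ : EuclideanSpace ℂ (Fin n → Fin 2)) :
    inner ℂ (dicke n k) ψ = ∑ i, if hammingNorm i = k then ψ i else 0 := by
  simp [PiLp.inner_apply, dicke_apply, apply_ite]

lemma inner_dicke_dicke_of_ne {n k l : ℕ} (h : k ≠ l) :
    inner ℂ (dicke n k) (dicke n l) = 0 := by
  rw [inner_dicke_left]
  refine sum_eq_zero fun i _ => ?_
  split_ifs with hk <;> simp [dicke_apply, hk, h]

lemma linearIndependent_dicke (n : ℕ) {s : Set ℕ} (hs : ∀ k ∈ s, k ≤ n) :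
    LinearIndependent ℂ (fun k : s => dicke n k) :=
  linearIndependent_of_ne_zero_of_inner_eq_zero (fun k => dicke_ne_zero (hs k k.2))
    fun _ _ hkl => inner_dicke_dicke_of_ne (Subtype.coe_injective.ne hkl)

lemma finrank_span_dicke (n : ℕ) {s : Finset ℕ} (hs : ∀ k ∈ s, k ≤ n) :
    Module.finrank ℂ (Submodule.span ℂ (dicke n '' s)) = #s := by
  rw [Set.image_eq_range, finrank_span_eq_card (linearIndependent_dicke n hs)]
  simp

lemma finrank_orthogonal_span_dicke (n : ℕ) :
    Module.finrank ℂ (Submodule.span ℂ (dicke n '' ↑(range (n + 1))))ᗮ = 2 ^ n - n - 1 := by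
  have hsum := (Submodule.span ℂ (dicke n '' ↑(range (n + 1)))).finrank_add_finrank_orthogonal
  rw [finrank_span_dicke n (by simp), card_range, finrank_euclideanSpace, Fintype.card_fun,
    Fintype.card_fin, Fintype.card_fin] at hsum
  have := n.lt_two_pow_self
  omega

lemma isOrtho_span_dicke (n : ℕ) {s t : Set ℕ} (hst : Disjoint s t) :
    (Submodule.span ℂ (dicke n '' s)).IsOrtho (Submodule.span ℂ (dicke n '' t)) := by
  rw [Submodule.isOrtho_span]
  rintro _ ⟨k, hk, rfl⟩ _ ⟨l, hl, rfl⟩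
  exact inner_dicke_dicke_of_ne (hst.ne_of_mem hk hl)

lemma exists_eq_comp_hammingNorm_of_mem_span_dicke {n : ℕ} {s : Set ℕ}
    {ψ : EuclideanSpace ℂ (Fin n → Fin 2)} (hψ : ψ ∈ Submodule.span ℂ (dicke n '' s)) :
    ∃ c : ℕ → ℂ, (∀ k ∉ s, c k = 0) ∧ ∀ i, ψ i = c (hammingNorm i) := by
  induction hψ using Submodule.span_induction with
  | mem _ h =>
    obtain ⟨k, hk, rfl⟩ := h
    exact ⟨Pi.single k 1, fun l hl => Pi.single_eq_of_ne (by grind) _,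
      fun i => by simp [dicke_apply, Pi.single_apply]⟩
  | zero => exact ⟨0, fun _ _ => rfl, fun _ => rfl⟩
  | add _ _ _ _ h₁ h₂ =>
    obtain ⟨c₁, hc₁, hψ₁⟩ := h₁
    obtain ⟨c₂, hc₂, hψ₂⟩ := h₂
    exact ⟨c₁ + c₂, fun k hk => by simp [hc₁ k hk, hc₂ k hk],
      fun i => by simp [hψ₁, hψ₂]⟩
  | smul a _ _ h =>
    obtain ⟨c, hc, hψ⟩ := h
    exact ⟨a • c, fun k hk => by simp [hc k hk], fun i => by simp [hψ]⟩

open Classical in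
lemma Biseparable.mul_eq_mul_piecewise {n : ℕ} {S : Set (Fin n)}
    {ψ : EuclideanSpace ℂ (Fin n → Fin 2)} (h : Biseparable S ψ) (x y : Fin n → Fin 2) :
    ψ x * ψ y = ψ (S.piecewise x y) * ψ (S.piecewise y x) := by
  obtain ⟨φ, χ, hψ⟩ := h
  have hS : ∀ j : S, ∀ x y : Fin n → Fin 2, S.piecewise x y j = x j :=
    fun j _ _ => Set.piecewise_eq_of_mem _ _ _ j.2
  have hSc : ∀ j : ↥Sᶜ, ∀ x y : Fin n → Fin 2, S.piecewise x y j = y j :=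
    fun j _ _ => Set.piecewise_eq_of_notMem _ _ _ j.2
  simp only [hψ, hS, hSc]
  ring

lemma Biseparable.sq_eq_mul {n : ℕ} {S : Set (Fin n)}
    {ψ : EuclideanSpace ℂ (Fin n → Fin 2)} (h : Biseparable S ψ) {j₀ j₁ : Fin n}
    (h₀ : j₀ ∈ S) (h₁ : j₁ ∉ S) {c : ℕ → ℂ}
    (hc : ∀ i, ψ i = c (hammingNorm i)) {m : ℕ} (hm : m + 2 ≤ n) :
    c (m + 1) ^ 2 = c m * c (m + 2) := by
  classical
  have hne : j₀ ≠ j₁ := by rintro rfl; exact h₁ h₀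
  obtain ⟨T, hT, rfl⟩ : ∃ T ⊆ univ \ {j₀, j₁}, #T = m :=
    exists_subset_card_eq <| by
      rw [card_sdiff_of_subset (subset_univ _), card_pair hne, card_univ, Fintype.card_fin]
      omega
  have h₀T : j₀ ∉ T := fun h => by simpa using hT h
  have h₁T : j₁ ∉ T := fun h => by simpa using hT h
  have key := h.mul_eq_mul_piecewise (bits (insert j₀ T)) (bits (insert j₁ T))
  have hxy : S.piecewise (bits (insert j₀ T)) (bits (insert j₁ T)) =
      bits (insert j₀ (insert j₁ T)) := by
    funext j
    by_cases hj : j ∈ S <;> simp [Set.piecewise, bits, hj] <;> grind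
  have hyx : S.piecewise (bits (insert j₁ T)) (bits (insert j₀ T)) = bits T := by
    funext j
    by_cases hj : j ∈ S <;> simp [Set.piecewise, bits, hj] <;> grind
  rw [hxy, hyx] at key
  simp only [hc, hammingNorm_bits] at key
  rw [card_insert_of_notMem h₀T, card_insert_of_notMem h₁T,
    card_insert_of_notMem (by simp [hne, h₀T]), card_insert_of_notMem h₁T] at key
  linear_combination key

lemma Biseparable.eq_zero {n : ℕ} {S : Set (Fin n)}
    {ψ : EuclideanSpace ℂ (Fin n → Fin 2)} (h : Biseparable S ψ) (hS : S ≠ ∅)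
    (hS' : S ≠ Set.univ) {c : ℕ → ℂ}
    (hc : ∀ i, ψ i = c (hammingNorm i)) (hc₀ : c 0 = 0) (hcn : c n = 0) : ψ = 0 := by
  obtain ⟨j₀, h₀⟩ := Set.nonempty_iff_ne_empty.mpr hS
  obtain ⟨j₁, h₁⟩ := (Set.ne_univ_iff_exists_notMem S).mp hS'
  have hlt : ∀ m < n, c m = 0 := by
    intro m hm
    induction m with
    | zero => exact hc₀
    | succ m ih =>
      have := h.sq_eq_mul h₀ h₁ hc (m := m) (by omega)
      rwa [ih (by omega), zero_mul, sq_eq_zero_iff] at this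
  ext i
  rw [hc, PiLp.zero_apply]
  rcases (hammingNorm_le_card_fintype (x := i)).lt_or_eq with hi | hi
  · exact hlt _ (by simpa using hi)
  · simpa [hi] using hcn

lemma gme_of_mem_span_dicke {n : ℕ} {s : Set ℕ} (h₀ : 0 ∉ s) (hn : n ∉ s)
    {ψ : EuclideanSpace ℂ (Fin n → Fin 2)} (hψ : ψ ∈ Submodule.span ℂ (dicke n '' s))
    (hψ₀ : ψ ≠ 0) : GME ψ := by
  obtain ⟨c, hcs, hc⟩ := exists_eq_comp_hammingNorm_of_mem_span_dicke hψ
  exact ⟨hψ₀, fun S hS hS' hb => hψ₀ (hb.eq_zero hS hS' hc (hcs 0 h₀) (hcs n hn))⟩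

open Polynomial in
lemma prod_add_mul_X_eq_sum_hammingNorm {R : Type*} [CommSemiring R] {n : ℕ}
    (φ : Fin n → Fin 2 → R) :
    ∏ j, (C (φ j 0) + C (φ j 1) * X) =
      ∑ i : Fin n → Fin 2, C (∏ j, φ j (i j)) * X ^ hammingNorm i := by
  have hfac : ∀ j, C (φ j 0) + C (φ j 1) * X = ∑ x : Fin 2, C (φ j x) * X ^ (x : ℕ) := by
    simp [Fin.sum_univ_two]
  simp_rw [hfac, prod_univ_sum, Fintype.piFinset_univ, prod_mul_distrib, ← map_prod,
    prod_pow_eq_pow_sum, sum_val_eq_hammingNorm]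

open Polynomial in
lemma FullyProduct.eq_zero_of_inner_dicke_eq_zero {n : ℕ}
    {ψ : EuclideanSpace ℂ (Fin n → Fin 2)} (h : FullyProduct ψ)
    (hψ : ∀ k ≤ n, inner ℂ (dicke n k) ψ = 0) : ψ = 0 := by
  obtain ⟨φ, hφ⟩ := h
  have hP : ∏ j, (C (φ j 0) + C (φ j 1) * X) = 0 := by
    ext k
    simp_rw [prod_add_mul_X_eq_sum_hammingNorm, finsetSum_coeff, ← hφ, coeff_C_mul_X_pow,
      coeff_zero]
    by_cases hk : k ≤ n
    · simpa [inner_dicke_left, eq_comm] using hψ k hk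
    · refine sum_eq_zero fun i _ => if_neg fun hki => hk ?_
      simpa [hki] using hammingNorm_le_card_fintype (x := i)
  obtain ⟨j, -, hj⟩ := prod_eq_zero_iff.mp hP
  have hφj : φ j = 0 := funext <| Fin.forall_fin_two.mpr
    ⟨by simpa using congrArg (coeff · 0) hj, by simpa using congrArg (coeff · 1) hj⟩
  ext i
  rw [hφ, PiLp.zero_apply]
  exact prod_eq_zero (mem_univ j) (by rw [hφj, Pi.zero_apply])

theorem nqubit_decomposition_general (n : ℕ)
    (W : Submodule ℂ (EuclideanSpace ℂ (Fin n → Fin 2)))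
    (hW : W = Submodule.span ℂ {v | ∃ k ≤ n, v = dicke n k})
    (A : Submodule ℂ (EuclideanSpace ℂ (Fin n → Fin 2)))
    (hA : A = Submodule.span ℂ
        {EuclideanSpace.single (fun _ => (0 : Fin 2)) (1 : ℂ),
         EuclideanSpace.single (fun _ => (1 : Fin 2)) (1 : ℂ)})
    (B : Submodule ℂ (EuclideanSpace ℂ (Fin n → Fin 2)))
    (hB : B = Submodule.span ℂ {v | ∃ k, 1 ≤ k ∧ k ≤ n - 1 ∧ v = dicke n k}) :
    Submodule.IsOrtho A B ∧ Submodule.IsOrtho A Wᗮ ∧ Submodule.IsOrtho B Wᗮ ∧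
    A ⊔ B ⊔ Wᗮ = ⊤ ∧
    Module.finrank ℂ ↥B = n - 1 ∧
    (∀ ψ ∈ B, ψ ≠ 0 → GME ψ) ∧
    Module.finrank ℂ ↥(Wᗮ) = 2 ^ n - n - 1 ∧
    (∀ ψ ∈ Wᗮ, FullyProduct ψ → ψ = 0) := by
  have hW' : W = Submodule.span ℂ (dicke n '' ↑(range (n + 1))) := by
    rw [hW]; congr 1; ext; simp [eq_comm]
  have hA' : A = Submodule.span ℂ (dicke n '' {0, n}) := by
    rw [hA, Set.image_pair, dicke_zero, dicke_self]
  have hB' : B = Submodule.span ℂ (dicke n '' ↑(Icc 1 (n - 1))) := by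
    rw [hB]; congr 1; ext; simp [eq_comm, and_assoc]
  have hAB : A ⊔ B = W := by
    rw [hA', hB', hW', ← Submodule.span_union, ← Set.image_union]
    congr 2; ext; simp; omega
  have hAW : A ≤ W := hAB ▸ le_sup_left
  have hBW : B ≤ W := hAB ▸ le_sup_right
  refine ⟨?_, W.isOrtho_orthogonal_right.mono_left hAW,
    W.isOrtho_orthogonal_right.mono_left hBW, ?_, ?_, ?_, ?_, ?_⟩
  · rw [hA', hB']
    exact isOrtho_span_dicke n (by simp; omega)
  · rw [hAB]
    exact W.sup_orthogonal_of_hasOrthogonalProjection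
  · rw [hB', finrank_span_dicke n fun k hk => by simp at hk; omega, Nat.card_Icc]
    omega
  · exact fun ψ hψ => gme_of_mem_span_dicke (by simp) (by simp; omega) (hB' ▸ hψ)
  · rw [hW']
    exact finrank_orthogonal_span_dicke n
  · exact fun ψ hψ hprod => hprod.eq_zero_of_inner_dicke_eq_zero fun k hk =>
      (W.mem_orthogonal ψ).mp hψ _ (hW ▸ Submodule.subset_span ⟨k, hk, rfl⟩)

/-- Theorem 3: the `n`-qubit Hilbert space decomposes as the orthogonal direct sum
`span{|0…0⟩, |1…1⟩} ⊕ GES_{n−1} ⊕ CES_{2^n − n − 1}`. -/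
theorem nqubit_decomposition (n : ℕ) (hn : 2 ≤ n)
    (W : Submodule ℂ (EuclideanSpace ℂ (Fin n → Fin 2)))
    (hW : W = Submodule.span ℂ {v | ∃ k ≤ n, v = dicke n k})
    (A : Submodule ℂ (EuclideanSpace ℂ (Fin n → Fin 2)))
    (hA : A = Submodule.span ℂ
        {EuclideanSpace.single (fun _ => (0 : Fin 2)) (1 : ℂ),
         EuclideanSpace.single (fun _ => (1 : Fin 2)) (1 : ℂ)})
    (B : Submodule ℂ (EuclideanSpace ℂ (Fin n → Fin 2)))
    (hB : B = Submodule.span ℂ {v | ∃ k, 1 ≤ k ∧ k ≤ n - 1 ∧ v = dicke n k}) :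
    Submodule.IsOrtho A B ∧ Submodule.IsOrtho A Wᗮ ∧ Submodule.IsOrtho B Wᗮ ∧
    A ⊔ B ⊔ Wᗮ = ⊤ ∧
    Module.finrank ℂ ↥B = n - 1 ∧
    (∀ ψ ∈ B, ψ ≠ 0 → GME ψ) ∧
    Module.finrank ℂ ↥(Wᗮ) = 2 ^ n - n - 1 ∧
    (∀ ψ ∈ Wᗮ, FullyProduct ψ → ψ = 0) :=
  nqubit_decomposition_general n W hW A hA B hB
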